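/- Let n ≥ 1, δ ∈ (0, n], α ∈ (0, δ), κ ∈ [0, α), and p ∈ [1, δ/α). Then there is a constant c depending only on n, α, δ, κ, and p such that for all functions f : ℝⁿ → [−∞, ∞] and every x ∈ ℝⁿ, R^δ_α f(x) ≤ c ( M^δ_κ f(x) )^{(δ−pα)/(δ−κp)} ( ∫_{ℝⁿ} |f(y)|^p dH^δ_∞(y) )^{(α−κ)/(δ−κp)} (Hedberg-type pointwise inequality for the Hausdorff content Riesz potential). -/

import Mathlib

/-!
On the annulus `2 ^ j ≤ |x - y| < 2 ^ (j + 1)` the kernel `|x - y| ^ (α - δ)` is at most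
`2 ^ (-j (δ - α))`, so countable subadditivity of `H^δ_∞` and the homogeneity of the Choquet
integral give `R^δ_α f(x) ≤ ∑_{j ∈ ℤ} 2 ^ (-j (δ - α)) ∫_{B(x, 2 ^ (j + 1))} |f| dH^δ_∞`.
The `j`-th term is at most `M^δ_κ f(x) 2 ^ (j (α - κ))` by the definition of the maximal
function, and at most `(∫ |f| ^ p dH^δ_∞) ^ (1/p) 2 ^ (j (α - δ/p))` by integrating the
Chebyshev bound `H^δ_∞(B(x, r) ∩ {|f| > s}) ≤ min (r ^ δ, s ^ (-p) ∫ |f| ^ p dH^δ_∞)`.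
The first bound decays as `j → -∞`, the second as `j → ∞`; summing both geometric series on
either side of the scale where they cross gives the product of powers in the statement.
-/

open Metric Set ENNReal

/-- The δ-dimensional Hausdorff content of a set `E ⊆ ℝⁿ`: the infimum of `∑ rᵢ^δ`
over all countable covers of `E` by open balls `B(xᵢ, rᵢ)`. -/
noncomputable def hContent (n : ℕ) (δ : ℝ) (E : Set (EuclideanSpace ℝ (Fin n))) : ℝ≥0∞ :=
  ⨅ (c : ℕ → EuclideanSpace ℝ (Fin n)) (r : ℕ → NNReal)
    (_ : E ⊆ ⋃ i, Metric.ball (c i) (r i)), ∑' i, (r i : ℝ≥0∞) ^ δ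

/-- The Choquet integral `∫_Ω f dH^δ_∞ = ∫_0^∞ H^δ_∞({x ∈ Ω : f x > t}) dt`. -/
noncomputable def choquet (n : ℕ) (δ : ℝ) (Ω : Set (EuclideanSpace ℝ (Fin n)))
    (f : EuclideanSpace ℝ (Fin n) → ℝ≥0∞) : ℝ≥0∞ :=
  ∫⁻ t in Set.Ioi (0 : ℝ), hContent n δ {x | x ∈ Ω ∧ ENNReal.ofReal t < f x}

/-- The Hausdorff content centred fractional maximal function `M^δ_κ f`. -/
noncomputable def maxF (n : ℕ) (δ κ : ℝ) (f : EuclideanSpace ℝ (Fin n) → EReal)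
    (x : EuclideanSpace ℝ (Fin n)) : ℝ≥0∞ :=
  ⨆ (r : ℝ) (_ : 0 < r),
    (ENNReal.ofReal (r ^ κ) / hContent n δ (Metric.ball x r)) *
      choquet n δ (Metric.ball x r) (fun y => (f y).abs)

/-- The Hausdorff content Riesz potential `R^δ_α f`. -/
noncomputable def riesz (n : ℕ) (δ α : ℝ) (f : EuclideanSpace ℝ (Fin n) → EReal)
    (x : EuclideanSpace ℝ (Fin n)) : ℝ≥0∞ :=
  choquet n δ Set.univ (fun y => (f y).abs / ENNReal.ofReal (dist x y ^ (δ - α)))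

open NNReal MeasureTheory

section HausdorffContent

variable {n : ℕ} {δ : ℝ}

lemma hContent_le_tsum {E : Set (EuclideanSpace ℝ (Fin n))} {c : ℕ → EuclideanSpace ℝ (Fin n)}
    {r : ℕ → ℝ≥0} (h : E ⊆ ⋃ i, ball (c i) (r i)) :
    hContent n δ E ≤ ∑' i, (r i : ℝ≥0∞) ^ δ :=
  iInf_le_of_le c <| iInf_le_of_le r <| iInf_le _ h

lemma hContent_mono {E F : Set (EuclideanSpace ℝ (Fin n))} (h : E ⊆ F) :
    hContent n δ E ≤ hContent n δ F :=
  le_iInf₂ fun _ _ => le_iInf fun hF => hContent_le_tsum (h.trans hF)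

lemma hContent_le_of_subset_ball (hδ : 0 < δ) {E : Set (EuclideanSpace ℝ (Fin n))}
    {c : EuclideanSpace ℝ (Fin n)} {r : ℝ≥0} (h : E ⊆ ball c r) :
    hContent n δ E ≤ (r : ℝ≥0∞) ^ δ := by
  have hcover : E ⊆ ⋃ i : ℕ, ball c (if i = 0 then r else 0 : ℝ≥0) :=
    h.trans (subset_iUnion_of_subset 0 (by simp))
  refine (hContent_le_tsum hcover).trans_eq ?_
  rw [tsum_eq_single 0 fun i hi => by simp [hi, ENNReal.zero_rpow_of_pos hδ]]
  simp

lemma hContent_ball_le (hδ : 0 < δ) (x : EuclideanSpace ℝ (Fin n)) {r : ℝ} (hr : 0 ≤ r) :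
    hContent n δ (ball x r) ≤ ENNReal.ofReal (r ^ δ) := by
  rw [← ENNReal.ofReal_rpow_of_nonneg hr hδ.le]
  exact hContent_le_of_subset_ball hδ (by rw [Real.coe_toNNReal r hr])

lemma hContent_singleton (hδ : 0 < δ) (x : EuclideanSpace ℝ (Fin n)) :
    hContent n δ {x} = 0 := by
  refine le_antisymm (ENNReal.le_of_forall_pos_le_add fun ε hε _ => ?_) zero_le
  have hsub : {x} ⊆ ball x (ε ^ (1 / δ) : ℝ≥0) := by
    simpa using NNReal.coe_pos.2 (NNReal.rpow_pos (x := ε) hε)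
  calc hContent n δ {x} ≤ ((ε ^ (1 / δ) : ℝ≥0) : ℝ≥0∞) ^ δ := hContent_le_of_subset_ball hδ hsub
    _ = ε := by rw [← ENNReal.coe_rpow_of_nonneg _ hδ.le, NNReal.rpow_self_rpow_inv hδ.ne']
    _ ≤ 0 + ε := by simp

lemma hContent_iUnion_le (E : ℕ → Set (EuclideanSpace ℝ (Fin n))) :
    hContent n δ (⋃ i, E i) ≤ ∑' i, hContent n δ (E i) := by
  refine ENNReal.le_of_forall_pos_le_add fun ε hε hfin => ?_
  obtain ⟨ε', hε'0, hε'⟩ := ENNReal.exists_pos_sum_of_countable (ENNReal.coe_ne_zero.2 hε.ne') ℕ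
  have hcover : ∀ i, ∃ (c : ℕ → EuclideanSpace ℝ (Fin n)) (r : ℕ → ℝ≥0),
      E i ⊆ ⋃ k, ball (c k) (r k) ∧ ∑' k, (r k : ℝ≥0∞) ^ δ < hContent n δ (E i) + ε' i := by
    intro i
    have hlt : hContent n δ (E i) < hContent n δ (E i) + ε' i :=
      ENNReal.lt_add_right (ne_top_of_le_ne_top hfin.ne (ENNReal.le_tsum i))
        (by simpa using (hε'0 i).ne')
    simpa only [hContent, iInf_lt_iff, exists_prop] using hlt
  choose c r hcov hsum using hcover
  let e : ℕ ≃ ℕ × ℕ := Nat.pairEquiv.symm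
  have hcov' : ⋃ i, E i ⊆ ⋃ m, ball (c (e m).1 (e m).2) (r (e m).1 (e m).2) := by
    refine iUnion_subset fun i y hy => ?_
    obtain ⟨k, hk⟩ := mem_iUnion.1 (hcov i hy)
    exact mem_iUnion.2 ⟨e.symm (i, k), by simpa using hk⟩
  calc hContent n δ (⋃ i, E i) ≤ ∑' m, (r (e m).1 (e m).2 : ℝ≥0∞) ^ δ := hContent_le_tsum hcov'
    _ = ∑' i, ∑' k, (r i k : ℝ≥0∞) ^ δ :=
      (e.tsum_eq fun q => (r q.1 q.2 : ℝ≥0∞) ^ δ).trans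
        (ENNReal.tsum_prod (f := fun i k => (r i k : ℝ≥0∞) ^ δ))
    _ ≤ ∑' i, (hContent n δ (E i) + ε' i) := ENNReal.tsum_le_tsum fun i => (hsum i).le
    _ ≤ ∑' i, hContent n δ (E i) + ε := by rw [ENNReal.tsum_add]; exact add_le_add_right hε'.le _

noncomputable def hContentOuterMeasure (n : ℕ) (hδ : 0 < δ) :
    OuterMeasure (EuclideanSpace ℝ (Fin n)) where
  measureOf := hContent n δ
  empty := le_antisymm
    ((hContent_mono (empty_subset {0})).trans_eq (hContent_singleton hδ 0)) zero_le
  mono := hContent_mono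
  iUnion_nat s _ := hContent_iUnion_le s

lemma hContentOuterMeasure_apply (hδ : 0 < δ) (E : Set (EuclideanSpace ℝ (Fin n))) :
    hContentOuterMeasure n hδ E = hContent n δ E := rfl

end HausdorffContent

section Choquet

variable {n : ℕ} {δ : ℝ}

lemma antitone_hContent_superlevel (Ω : Set (EuclideanSpace ℝ (Fin n)))
    (g : EuclideanSpace ℝ (Fin n) → ℝ≥0∞) :
    Antitone fun s : ℝ => hContent n δ {y | y ∈ Ω ∧ ENNReal.ofReal s < g y} :=
  fun _ _ hst => hContent_mono fun _ hy =>
    ⟨hy.1, (ENNReal.ofReal_le_ofReal hst).trans_lt hy.2⟩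

lemma choquet_mono_set {Ω Ω' : Set (EuclideanSpace ℝ (Fin n))} (h : Ω ⊆ Ω')
    (g : EuclideanSpace ℝ (Fin n) → ℝ≥0∞) : choquet n δ Ω g ≤ choquet n δ Ω' g :=
  lintegral_mono fun _ => hContent_mono fun _ hy => ⟨h hy.1, hy.2⟩

lemma choquet_eq_zero_of_hContent_eq_zero {Ω : Set (EuclideanSpace ℝ (Fin n))}
    (hΩ : hContent n δ Ω = 0) (g : EuclideanSpace ℝ (Fin n) → ℝ≥0∞) : choquet n δ Ω g = 0 := by
  refine le_antisymm ?_ zero_le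
  calc choquet n δ Ω g ≤ ∫⁻ _ in Ioi (0 : ℝ), 0 :=
        lintegral_mono fun _ => (hContent_mono fun _ hy => hy.1).trans hΩ.le
    _ = 0 := lintegral_zero

lemma ofReal_mul_hContent_le_choquet (Ω : Set (EuclideanSpace ℝ (Fin n)))
    (g : EuclideanSpace ℝ (Fin n) → ℝ≥0∞) (s : ℝ) :
    ENNReal.ofReal s * hContent n δ {y | y ∈ Ω ∧ ENNReal.ofReal s < g y} ≤ choquet n δ Ω g :=
  calc ENNReal.ofReal s * hContent n δ {y | y ∈ Ω ∧ ENNReal.ofReal s < g y}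
      = ∫⁻ _ in Ioo (0 : ℝ) s, hContent n δ {y | y ∈ Ω ∧ ENNReal.ofReal s < g y} := by
        rw [setLIntegral_const, Real.volume_Ioo, sub_zero, mul_comm]
    _ ≤ ∫⁻ t in Ioo (0 : ℝ) s, hContent n δ {y | y ∈ Ω ∧ ENNReal.ofReal t < g y} :=
        setLIntegral_mono' measurableSet_Ioo fun _ ht =>
          antitone_hContent_superlevel Ω g ht.2.le
    _ ≤ choquet n δ Ω g := lintegral_mono_set Ioo_subset_Ioi_self

lemma hContent_superlevel_le (Ω : Set (EuclideanSpace ℝ (Fin n)))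
    (g : EuclideanSpace ℝ (Fin n) → ℝ≥0∞) {s p : ℝ} (hs : 0 < s) (hp : 0 < p) :
    hContent n δ {y | y ∈ Ω ∧ ENNReal.ofReal s < g y}
      ≤ choquet n δ univ (fun y => g y ^ p) * ENNReal.ofReal (s ^ (-p)) := by
  have hsp : 0 < s ^ p := Real.rpow_pos_of_pos hs p
  have hsub : {y | y ∈ Ω ∧ ENNReal.ofReal s < g y}
      ⊆ {y | y ∈ univ ∧ ENNReal.ofReal (s ^ p) < g y ^ p} := fun y hy =>
    ⟨mem_univ y, ENNReal.ofReal_rpow_of_pos hs ▸ ENNReal.rpow_lt_rpow hy.2 hp⟩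
  rw [Real.rpow_neg hs.le, ENNReal.ofReal_inv_of_pos hsp, ← div_eq_mul_inv,
    ENNReal.le_div_iff_mul_le (Or.inl (ENNReal.ofReal_pos.2 hsp).ne') (Or.inl ofReal_ne_top),
    mul_comm]
  exact (mul_le_mul_right (hContent_mono hsub) _).trans
    (ofReal_mul_hContent_le_choquet univ _ _)

lemma setLIntegral_Ioi_comp_mul_left {F : ℝ → ℝ≥0∞} (hF : Measurable F) {c : ℝ} (hc : 0 < c) :
    ∫⁻ t in Ioi 0, F (c * t) = ENNReal.ofReal c⁻¹ * ∫⁻ s in Ioi 0, F s := by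
  have hind : ∀ t, (Ioi (0 : ℝ)).indicator (fun t => F (c * t)) t
      = (Ioi (0 : ℝ)).indicator F (c * t) := fun t => by
    by_cases ht : 0 < t <;> simp [indicator, ht, mul_pos_iff_of_pos_left hc]
  rw [← lintegral_indicator measurableSet_Ioi, ← lintegral_indicator measurableSet_Ioi,
    lintegral_congr hind, ← lintegral_map (hF.indicator measurableSet_Ioi)
      (measurable_const_mul c), Real.map_volume_mul_left hc.ne', lintegral_smul_measure,
    abs_of_pos (inv_pos.2 hc), smul_eq_mul]

lemma lintegral_hContent_superlevel_mul (Ω : Set (EuclideanSpace ℝ (Fin n)))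
    (g : EuclideanSpace ℝ (Fin n) → ℝ≥0∞) {c : ℝ} (hc : 0 < c) :
    ∫⁻ t in Ioi 0, hContent n δ {y | y ∈ Ω ∧ ENNReal.ofReal (c * t) < g y}
      = ENNReal.ofReal c⁻¹ * choquet n δ Ω g :=
  setLIntegral_Ioi_comp_mul_left (antitone_hContent_superlevel Ω g).measurable hc

end Choquet

section BallEstimates

variable {n : ℕ} {δ : ℝ}

lemma choquet_ball_le_maxF (hδ : 0 < δ) (κ : ℝ) (f : EuclideanSpace ℝ (Fin n) → EReal)
    (x : EuclideanSpace ℝ (Fin n)) {r : ℝ} (hr : 0 < r) :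
    choquet n δ (ball x r) (fun y => (f y).abs) ≤
      maxF n δ κ f x * ENNReal.ofReal (r ^ (δ - κ)) := by
  set C := choquet n δ (ball x r) (fun y => (f y).abs)
  set H := hContent n δ (ball x r)
  set a := ENNReal.ofReal (r ^ κ)
  rcases eq_or_ne H 0 with hH | hH
  · rw [show C = 0 from choquet_eq_zero_of_hContent_eq_zero hH _]
    exact zero_le
  have ha : a ≠ 0 := (ENNReal.ofReal_pos.2 (Real.rpow_pos_of_pos hr κ)).ne'
  have hHle : H ≤ ENNReal.ofReal (r ^ δ) := hContent_ball_le hδ x hr.le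
  have hmax : a / H * C ≤ maxF n δ κ f x :=
    le_iSup₂ (f := fun (r : ℝ) (_ : 0 < r) => ENNReal.ofReal (r ^ κ) / hContent n δ (ball x r) *
      choquet n δ (ball x r) (fun y => (f y).abs)) r hr
  have hCa : C * a ≤ maxF n δ κ f x * H := by
    calc C * a = a / H * C * H := by
          rw [mul_right_comm, ENNReal.div_mul_cancel hH (ne_top_of_le_ne_top ofReal_ne_top hHle),
            mul_comm]
      _ ≤ maxF n δ κ f x * H := mul_le_mul_left hmax H
  calc C ≤ maxF n δ κ f x * H / a :=
        (ENNReal.le_div_iff_mul_le (Or.inl ha) (Or.inl ofReal_ne_top)).2 hCa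
    _ = maxF n δ κ f x * (H / a) := mul_div_assoc _ _ _
    _ ≤ maxF n δ κ f x * ENNReal.ofReal (r ^ (δ - κ)) := by
      refine mul_le_mul_right ?_ _
      rw [Real.rpow_sub hr, ENNReal.ofReal_div_of_pos (Real.rpow_pos_of_pos hr κ)]
      exact ENNReal.div_le_div_right hHle a

lemma mul_rpow_inv_eq_rpow_mul_rpow {a b p : ℝ} (ha : 0 < a) (hb : 0 < b) :
    a * (b / a) ^ p⁻¹ = b ^ p⁻¹ * a ^ (1 - p⁻¹) := by
  rw [Real.div_rpow hb.le ha.le, Real.rpow_sub ha, Real.rpow_one]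
  ring

lemma mul_rpow_inv_rpow_eq_rpow_mul_rpow {a b p : ℝ} (ha : 0 < a) (hb : 0 < b) (hp : p ≠ 0) :
    b * ((b / a) ^ p⁻¹) ^ (1 - p) = b ^ p⁻¹ * a ^ (1 - p⁻¹) := by
  have hexp : p⁻¹ * (1 - p) = p⁻¹ - 1 := by field_simp
  rw [← Real.rpow_mul (div_pos hb ha).le, hexp, Real.div_rpow hb.le ha.le, Real.rpow_sub hb,
    Real.rpow_sub ha, Real.rpow_sub ha, Real.rpow_one, Real.rpow_one]
  field_simp

lemma lintegral_min_rpow_neg_le_of_pos {p a b : ℝ} (hp : 1 < p) (ha : 0 < a) (hb : 0 < b) :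
    ∫⁻ s in Ioi (0 : ℝ), min (ENNReal.ofReal a) (ENNReal.ofReal b * ENNReal.ofReal (s ^ (-p)))
      ≤ ENNReal.ofReal (p / (p - 1) * (b ^ p⁻¹ * a ^ (1 - p⁻¹))) := by
  set s₀ := (b / a) ^ p⁻¹
  have hs₀ : 0 < s₀ := Real.rpow_pos_of_pos (div_pos hb ha) _
  have hnear : ∫⁻ s in Ioc 0 s₀, min (ENNReal.ofReal a)
      (ENNReal.ofReal b * ENNReal.ofReal (s ^ (-p))) ≤ ENNReal.ofReal (a * s₀) :=
    calc _ ≤ ∫⁻ _ in Ioc 0 s₀, ENNReal.ofReal a := lintegral_mono fun _ => min_le_left _ _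
      _ = ENNReal.ofReal (a * s₀) := by
        rw [setLIntegral_const, Real.volume_Ioc, sub_zero, ENNReal.ofReal_mul ha.le]
  have hfar : ∫⁻ s in Ioi s₀, min (ENNReal.ofReal a)
      (ENNReal.ofReal b * ENNReal.ofReal (s ^ (-p))) ≤
        ENNReal.ofReal (b * (s₀ ^ (1 - p) / (p - 1))) :=
    calc _ ≤ ∫⁻ s in Ioi s₀, ENNReal.ofReal b * ENNReal.ofReal (s ^ (-p)) :=
          lintegral_mono fun _ => min_le_right _ _
      _ = ENNReal.ofReal b * ENNReal.ofReal (∫ s in Ioi s₀, s ^ (-p)) := by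
        rw [lintegral_const_mul' _ _ ofReal_ne_top, ofReal_integral_eq_lintegral_ofReal
          (integrableOn_Ioi_rpow_of_lt (by linarith) hs₀)
          (ae_restrict_of_forall_mem measurableSet_Ioi fun s hs =>
            Real.rpow_nonneg (hs₀.trans hs).le _)]
      _ = ENNReal.ofReal (b * (s₀ ^ (1 - p) / (p - 1))) := by
        rw [integral_Ioi_rpow_of_lt (by linarith) hs₀, ← ENNReal.ofReal_mul hb.le]
        congr 2
        rw [show -p + 1 = 1 - p by ring, neg_div, ← div_neg, neg_sub]
  have hsplit : Ioi (0 : ℝ) = Ioc 0 s₀ ∪ Ioi s₀ := (Ioc_union_Ioi_eq_Ioi hs₀.le).symm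
  calc _ ≤ ENNReal.ofReal (a * s₀) + ENNReal.ofReal (b * (s₀ ^ (1 - p) / (p - 1))) :=
        hsplit ▸ (lintegral_union_le _ _ _).trans (add_le_add hnear hfar)
    _ = ENNReal.ofReal (p / (p - 1) * (b ^ p⁻¹ * a ^ (1 - p⁻¹))) := by
      rw [← ENNReal.ofReal_add (by positivity) (by positivity [(sub_pos.2 hp)]), mul_div_assoc',
        mul_rpow_inv_eq_rpow_mul_rpow ha hb,
        mul_rpow_inv_rpow_eq_rpow_mul_rpow ha hb (by linarith)]
      have hp1 : p - 1 ≠ 0 := by linarith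
      congr 1
      field_simp
      ring

lemma lintegral_min_rpow_neg_le {p a : ℝ} (hp : 1 < p) (ha : 0 < a) (b : ℝ≥0∞) :
    ∫⁻ s in Ioi (0 : ℝ), min (ENNReal.ofReal a) (b * ENNReal.ofReal (s ^ (-p)))
      ≤ ENNReal.ofReal (p / (p - 1)) * b ^ p⁻¹ * ENNReal.ofReal a ^ (1 - p⁻¹) := by
  have hp0 : 0 < p := one_pos.trans hp
  rcases eq_or_ne b ∞ with rfl | hb
  · have hRHS : ENNReal.ofReal (p / (p - 1)) * ∞ ^ p⁻¹ * ENNReal.ofReal a ^ (1 - p⁻¹) = ∞ := by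
      rw [ENNReal.top_rpow_of_pos (inv_pos.2 hp0), ENNReal.mul_top, ENNReal.top_mul]
      · exact (ENNReal.rpow_pos (ENNReal.ofReal_pos.2 ha) ofReal_ne_top).ne'
      · exact (ENNReal.ofReal_pos.2 (div_pos hp0 (sub_pos.2 hp))).ne'
    rw [hRHS]
    exact le_top
  rcases eq_or_ne b 0 with rfl | hb0
  · simp
  have hbr : 0 < b.toReal := ENNReal.toReal_pos hb0 hb
  calc _ = ∫⁻ s in Ioi (0 : ℝ), min (ENNReal.ofReal a)
        (ENNReal.ofReal b.toReal * ENNReal.ofReal (s ^ (-p))) := by rw [ofReal_toReal hb]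
    _ ≤ ENNReal.ofReal (p / (p - 1) * (b.toReal ^ p⁻¹ * a ^ (1 - p⁻¹))) :=
      lintegral_min_rpow_neg_le_of_pos hp ha hbr
    _ = _ := by
      rw [ENNReal.ofReal_mul (div_pos hp0 (sub_pos.2 hp)).le,
        ENNReal.ofReal_mul (Real.rpow_nonneg hbr.le _), ← ENNReal.ofReal_rpow_of_pos hbr,
        ← ENNReal.ofReal_rpow_of_pos ha, ofReal_toReal hb, mul_assoc]

/-- At `p = 1` the summand `ENNReal.ofReal (p / (p - 1))` is the junk value `0`. -/
lemma choquet_ball_le_energy (hδ : 0 < δ) {p : ℝ} (hp : 1 ≤ p)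
    (g : EuclideanSpace ℝ (Fin n) → ℝ≥0∞) (x : EuclideanSpace ℝ (Fin n)) {r : ℝ} (hr : 0 < r) :
    choquet n δ (ball x r) g ≤ (ENNReal.ofReal (p / (p - 1)) + 1) *
      choquet n δ univ (fun y => g y ^ p) ^ p⁻¹ * ENNReal.ofReal (r ^ δ) ^ (1 - p⁻¹) := by
  rcases hp.eq_or_lt with rfl | hp
  · simpa using choquet_mono_set (subset_univ _) g
  set I := choquet n δ univ (fun y => g y ^ p)
  calc choquet n δ (ball x r) g
      ≤ ∫⁻ s in Ioi (0 : ℝ), min (ENNReal.ofReal (r ^ δ)) (I * ENNReal.ofReal (s ^ (-p))) :=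
        setLIntegral_mono' measurableSet_Ioi fun s hs => le_min
          ((hContent_mono fun _ hy => hy.1).trans (hContent_ball_le hδ x hr.le))
          (hContent_superlevel_le _ g hs (one_pos.trans hp))
    _ ≤ ENNReal.ofReal (p / (p - 1)) * I ^ p⁻¹ * ENNReal.ofReal (r ^ δ) ^ (1 - p⁻¹) :=
      lintegral_min_rpow_neg_le hp (Real.rpow_pos_of_pos hr δ) I
    _ ≤ _ := by gcongr; exact le_self_add

end BallEstimates

section Dyadic

variable {n : ℕ} {δ : ℝ}

lemma ofReal_two_rpow (y : ℝ) : ENNReal.ofReal ((2 : ℝ) ^ y) = 2 ^ y := by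
  rw [← ENNReal.ofReal_rpow_of_pos two_pos, ENNReal.ofReal_ofNat]

lemma two_rpow_add (y z : ℝ) : (2 : ℝ≥0∞) ^ (y + z) = 2 ^ y * 2 ^ z :=
  ENNReal.rpow_add y z two_ne_zero ofNat_ne_top

lemma superlevel_div_dist_rpow_subset {s : ℝ} (hs : 0 ≤ s) (g : EuclideanSpace ℝ (Fin n) → ℝ≥0∞)
    (x : EuclideanSpace ℝ (Fin n)) (t : ℝ) :
    {y | y ∈ univ ∧ ENNReal.ofReal t < g y / ENNReal.ofReal (dist x y ^ s)} ⊆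
      {x} ∪ ⋃ j : ℤ, {y | y ∈ ball x (2 ^ ((j : ℝ) + 1)) ∧
        ENNReal.ofReal (2 ^ ((j : ℝ) * s) * t) < g y} := by
  rintro y ⟨-, hy⟩
  rcases eq_or_ne y x with rfl | hyx
  · exact Or.inl rfl
  have hd : 0 < dist x y := dist_pos.2 hyx.symm
  obtain ⟨j, hjd, hdj⟩ := exists_mem_Ico_zpow hd one_lt_two
  refine Or.inr (mem_iUnion.2 ⟨j, ?_, ?_⟩)
  · rw [mem_ball, dist_comm, ← Int.cast_one, ← Int.cast_add, Real.rpow_intCast]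
    exact hdj
  have hds : ENNReal.ofReal (dist x y ^ s) ≠ 0 :=
    (ENNReal.ofReal_pos.2 (Real.rpow_pos_of_pos hd s)).ne'
  have hscale : (2 : ℝ) ^ ((j : ℝ) * s) ≤ dist x y ^ s := by
    rw [Real.rpow_mul zero_le_two, Real.rpow_intCast]
    exact Real.rpow_le_rpow (zpow_nonneg zero_le_two j) hjd hs
  calc ENNReal.ofReal (2 ^ ((j : ℝ) * s) * t)
      = ENNReal.ofReal (2 ^ ((j : ℝ) * s)) * ENNReal.ofReal t := ENNReal.ofReal_mul (by positivity)
    _ ≤ ENNReal.ofReal t * ENNReal.ofReal (dist x y ^ s) := by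
      rw [mul_comm]; exact mul_le_mul_right (ENNReal.ofReal_le_ofReal hscale) _
    _ < g y := (ENNReal.lt_div_iff_mul_lt (Or.inl hds) (Or.inl ofReal_ne_top)).1 hy

lemma riesz_le_tsum_dyadic (hδ : 0 < δ) {α : ℝ} (hαδ : α ≤ δ) (f : EuclideanSpace ℝ (Fin n) → EReal)
    (x : EuclideanSpace ℝ (Fin n)) :
    riesz n δ α f x ≤ ∑' j : ℤ, (2 : ℝ≥0∞) ^ (-((j : ℝ) * (δ - α))) *
      choquet n δ (ball x (2 ^ ((j : ℝ) + 1))) (fun y => (f y).abs) := by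
  set g : EuclideanSpace ℝ (Fin n) → ℝ≥0∞ := fun y => (f y).abs
  set B : ℤ → Set (EuclideanSpace ℝ (Fin n)) := fun j => ball x (2 ^ ((j : ℝ) + 1))
  set c : ℤ → ℝ := fun j => 2 ^ ((j : ℝ) * (δ - α))
  have hc : ∀ j, 0 < c j := fun j => Real.rpow_pos_of_pos two_pos _
  have hsplit : ∀ t : ℝ,
      hContent n δ {y | y ∈ univ ∧ ENNReal.ofReal t < g y / ENNReal.ofReal (dist x y ^ (δ - α))}
        ≤ ∑' j, hContent n δ {y | y ∈ B j ∧ ENNReal.ofReal (c j * t) < g y} := fun t =>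
    calc _ ≤ hContentOuterMeasure n hδ
          ({x} ∪ ⋃ j, {y | y ∈ B j ∧ ENNReal.ofReal (c j * t) < g y}) :=
          hContent_mono (superlevel_div_dist_rpow_subset (sub_nonneg.2 hαδ) g x t)
      _ ≤ hContentOuterMeasure n hδ {x} + ∑' j, hContentOuterMeasure n hδ
          {y | y ∈ B j ∧ ENNReal.ofReal (c j * t) < g y} :=
          (measure_union_le _ _).trans (add_le_add_right (measure_iUnion_le _) _)
      _ = _ := by rw [hContentOuterMeasure_apply, hContent_singleton hδ, zero_add]; rfl
  calc riesz n δ α f x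
      ≤ ∫⁻ t in Ioi 0, ∑' j, hContent n δ {y | y ∈ B j ∧ ENNReal.ofReal (c j * t) < g y} :=
        lintegral_mono fun t => hsplit t
    _ = ∑' j, ∫⁻ t in Ioi 0, hContent n δ {y | y ∈ B j ∧ ENNReal.ofReal (c j * t) < g y} :=
        lintegral_tsum fun j => ((antitone_hContent_superlevel (B j) g).measurable.comp
          (measurable_const_mul (c j))).aemeasurable
    _ = _ := tsum_congr fun j => by
      rw [lintegral_hContent_superlevel_mul _ g (hc j), ← Real.rpow_neg zero_le_two,
        ofReal_two_rpow]

end Dyadic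

section Balancing

lemma tsum_two_rpow_add_mul_nat (x y : ℝ) :
    ∑' k : ℕ, (2 : ℝ≥0∞) ^ (x + y * k) = 2 ^ x * (1 - 2 ^ y)⁻¹ := by
  simp_rw [two_rpow_add, ENNReal.rpow_mul, ENNReal.rpow_natCast]
  rw [ENNReal.tsum_mul_left, ENNReal.tsum_geometric]

lemma tsum_int_le_of_le_two_rpow {β γ : ℝ} {A B : ℝ≥0∞} {a : ℤ → ℝ≥0∞}
    (hA : ∀ j, a j ≤ A * 2 ^ ((j : ℝ) * β)) (hB : ∀ j, a j ≤ B * 2 ^ ((j : ℝ) * γ)) (J : ℤ) :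
    ∑' j, a j ≤ A * 2 ^ ((J : ℝ) * β) * (1 - 2 ^ (-β))⁻¹ +
      B * 2 ^ (((J : ℝ) + 1) * γ) * (1 - 2 ^ γ)⁻¹ := by
  rw [← (Equiv.addRight (J + 1)).tsum_eq,
    tsum_of_nat_of_neg_add_one ENNReal.summable ENNReal.summable, add_comm]
  simp only [Equiv.coe_addRight]
  gcongr
  · calc ∑' k : ℕ, a (-(k + 1) + (J + 1))
        ≤ ∑' k : ℕ, A * 2 ^ ((J : ℝ) * β + -β * k) := ENNReal.tsum_le_tsum fun k =>
          (hA _).trans_eq (by push_cast; ring_nf)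
      _ = _ := by rw [ENNReal.tsum_mul_left, tsum_two_rpow_add_mul_nat, mul_assoc]
  · calc ∑' k : ℕ, a (k + (J + 1))
        ≤ ∑' k : ℕ, B * 2 ^ (((J : ℝ) + 1) * γ + γ * k) := ENNReal.tsum_le_tsum fun k =>
          (hB _).trans_eq (by push_cast; ring_nf)
      _ = _ := by rw [ENNReal.tsum_mul_left, tsum_two_rpow_add_mul_nat, mul_assoc]

lemma exists_int_two_rpow_le {β γ : ℝ} (hβ : 0 < β) (hγ : γ < 0) {A B : ℝ≥0∞}
    (hA0 : A ≠ 0) (hAt : A ≠ ∞) (hB0 : B ≠ 0) (hBt : B ≠ ∞) :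
    ∃ J : ℤ, A * 2 ^ ((J : ℝ) * β) ≤ A ^ (-γ / (β - γ)) * B ^ (β / (β - γ)) ∧
      B * 2 ^ (((J : ℝ) + 1) * γ) ≤ A ^ (-γ / (β - γ)) * B ^ (β / (β - γ)) := by
  have hs : β - γ ≠ 0 := by linarith
  -- `X` is where `A X ^ β = B X ^ γ`; the scale `2 ^ J` is taken with `2 ^ J ≤ X < 2 ^ (J + 1)`.
  set X := A ^ (-(β - γ)⁻¹) * B ^ (β - γ)⁻¹
  have hX0 : X ≠ 0 := mul_ne_zero (by simp [ENNReal.rpow_eq_zero_iff, hA0, hAt])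
    (by simp [ENNReal.rpow_eq_zero_iff, hB0, hBt])
  have hXt : X ≠ ∞ := ENNReal.mul_ne_top (by simp [ENNReal.rpow_eq_top_iff, hA0, hAt])
    (by simp [ENNReal.rpow_eq_top_iff, hB0, hBt])
  have hXpow : ∀ e : ℝ, X ^ e = A ^ (-(β - γ)⁻¹ * e) * B ^ ((β - γ)⁻¹ * e) := fun e => by
    rw [ENNReal.mul_rpow_of_ne_top (by simp [ENNReal.rpow_eq_top_iff, hA0, hAt])
      (by simp [ENNReal.rpow_eq_top_iff, hB0, hBt]), ← ENNReal.rpow_mul, ← ENNReal.rpow_mul]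
  have hpow_one_add : ∀ {C : ℝ≥0∞}, C ≠ 0 → C ≠ ∞ → ∀ u : ℝ, C * C ^ u = C ^ (1 + u) :=
    fun hC0 hCt u => by rw [ENNReal.rpow_add _ _ hC0 hCt, ENNReal.rpow_one]
  have hAX : A * X ^ β = A ^ (-γ / (β - γ)) * B ^ (β / (β - γ)) := by
    rw [hXpow, ← mul_assoc, hpow_one_add hA0 hAt]
    congr 2 <;> field_simp
    ring
  have hBX : B * X ^ γ = A ^ (-γ / (β - γ)) * B ^ (β / (β - γ)) := by
    rw [hXpow, mul_left_comm, hpow_one_add hB0 hBt]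
    congr 2 <;> field_simp
    ring
  obtain ⟨J, hJ, hJ1⟩ := ENNReal.exists_mem_Ico_zpow hX0 hXt one_lt_two ofNat_ne_top
  refine ⟨J, hAX ▸ ?_, hBX ▸ ?_⟩
  · rw [ENNReal.rpow_mul, ENNReal.rpow_intCast]
    gcongr
  · have hXγ : X ^ γ = (X ^ (-γ))⁻¹ := by rw [← ENNReal.rpow_neg, neg_neg]
    have h2γ : (2 : ℝ≥0∞) ^ (((J : ℝ) + 1) * γ) = ((2 ^ (J + 1)) ^ (-γ))⁻¹ := by
      rw [← ENNReal.rpow_neg, ← ENNReal.rpow_intCast, ← ENNReal.rpow_mul]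
      push_cast
      ring_nf
    rw [hXγ, h2γ]
    gcongr
    linarith

theorem exists_tsum_le_of_le_two_rpow {β γ : ℝ} (hβ : 0 < β) (hγ : γ < 0) :
    ∃ C : ℝ≥0∞, C ≠ ∞ ∧ ∀ (A B : ℝ≥0∞) (a : ℤ → ℝ≥0∞), (∀ j, a j ≤ A * 2 ^ ((j : ℝ) * β)) →
      (∀ j, a j ≤ B * 2 ^ ((j : ℝ) * γ)) →
        ∑' j, a j ≤ C * A ^ (-γ / (β - γ)) * B ^ (β / (β - γ)) := by
  have hgeom : ∀ {y : ℝ}, y < 0 → (1 - (2 : ℝ≥0∞) ^ y)⁻¹ ≠ ∞ := fun hy => by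
    simpa [tsub_eq_zero_iff_le] using ENNReal.rpow_lt_one_of_one_lt_of_neg one_lt_two hy
  refine ⟨(1 - 2 ^ (-β))⁻¹ + (1 - 2 ^ γ)⁻¹,
    ENNReal.add_ne_top.2 ⟨hgeom (neg_neg_of_pos hβ), hgeom hγ⟩, fun A B a hA hB => ?_⟩
  have hs : 0 < β - γ := by linarith
  rcases eq_or_ne A 0 with rfl | hA0
  · simp [fun j => nonpos_iff_eq_zero.1 ((hA j).trans_eq (zero_mul _))]
  rcases eq_or_ne B 0 with rfl | hB0
  · simp [fun j => nonpos_iff_eq_zero.1 ((hB j).trans_eq (zero_mul _))]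
  by_cases hfin : A ≠ ∞ ∧ B ≠ ∞
  · obtain ⟨J, hJA, hJB⟩ := exists_int_two_rpow_le hβ hγ hA0 hfin.1 hB0 hfin.2
    calc ∑' j, a j ≤ A * 2 ^ ((J : ℝ) * β) * (1 - 2 ^ (-β))⁻¹ +
          B * 2 ^ (((J : ℝ) + 1) * γ) * (1 - 2 ^ γ)⁻¹ := tsum_int_le_of_le_two_rpow hA hB J
      _ ≤ A ^ (-γ / (β - γ)) * B ^ (β / (β - γ)) * (1 - 2 ^ (-β))⁻¹ +
          A ^ (-γ / (β - γ)) * B ^ (β / (β - γ)) * (1 - 2 ^ γ)⁻¹ := by gcongr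
      _ = _ := by ring
  · have hθA : 0 < -γ / (β - γ) := div_pos (neg_pos.2 hγ) hs
    have hθB : 0 < β / (β - γ) := div_pos hβ hs
    have hRHS : A ^ (-γ / (β - γ)) * B ^ (β / (β - γ)) = ∞ := by
      obtain rfl | rfl : A = ∞ ∨ B = ∞ := by tauto
      · rw [ENNReal.top_rpow_of_pos hθA, ENNReal.top_mul]
        simp [ENNReal.rpow_eq_zero_iff, hB0, hθB.le.not_gt]
      · rw [ENNReal.top_rpow_of_pos hθB, ENNReal.mul_top]
        simp [ENNReal.rpow_eq_zero_iff, hA0, hθA.le.not_gt]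
    rw [mul_assoc, hRHS, ENNReal.mul_top]
    · exact le_top
    · intro h
      exact ENNReal.inv_ne_zero.2 (ENNReal.sub_ne_top ENNReal.one_ne_top) (add_eq_zero.1 h).2

end Balancing

section Hedberg

variable {n : ℕ} {δ : ℝ}

lemma ofReal_two_rpow_rpow (y e : ℝ) : ENNReal.ofReal (((2 : ℝ) ^ y) ^ e) = 2 ^ (y * e) := by
  rw [← Real.rpow_mul zero_le_two, ofReal_two_rpow]

lemma dyadic_term_le_maxF (hδ : 0 < δ) (α κ : ℝ) (f : EuclideanSpace ℝ (Fin n) → EReal)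
    (x : EuclideanSpace ℝ (Fin n)) (j : ℤ) :
    (2 : ℝ≥0∞) ^ (-((j : ℝ) * (δ - α))) *
        choquet n δ (ball x (2 ^ ((j : ℝ) + 1))) (fun y => (f y).abs)
      ≤ maxF n δ κ f x * 2 ^ (δ - κ) * 2 ^ ((j : ℝ) * (α - κ)) :=
  calc _ ≤ 2 ^ (-((j : ℝ) * (δ - α))) * (maxF n δ κ f x * 2 ^ (((j : ℝ) + 1) * (δ - κ))) := by
        rw [← ofReal_two_rpow_rpow]
        exact mul_le_mul_right (choquet_ball_le_maxF hδ κ f x (Real.rpow_pos_of_pos two_pos _)) _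
    _ = _ := by
      rw [mul_left_comm, mul_assoc, ← two_rpow_add, ← two_rpow_add]
      ring_nf

lemma dyadic_term_le_energy (hδ : 0 < δ) (α : ℝ) {p : ℝ} (hp : 1 ≤ p)
    (f : EuclideanSpace ℝ (Fin n) → EReal) (x : EuclideanSpace ℝ (Fin n)) (j : ℤ) :
    (2 : ℝ≥0∞) ^ (-((j : ℝ) * (δ - α))) *
        choquet n δ (ball x (2 ^ ((j : ℝ) + 1))) (fun y => (f y).abs)
      ≤ (ENNReal.ofReal (p / (p - 1)) + 1) * 2 ^ (δ * (1 - p⁻¹)) *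
          choquet n δ univ (fun y => (f y).abs ^ p) ^ p⁻¹ * 2 ^ ((j : ℝ) * (α - δ * p⁻¹)) :=
  calc _ ≤ 2 ^ (-((j : ℝ) * (δ - α))) * ((ENNReal.ofReal (p / (p - 1)) + 1) *
          choquet n δ univ (fun y => (f y).abs ^ p) ^ p⁻¹ *
            2 ^ (((j : ℝ) + 1) * δ * (1 - p⁻¹))) := by
        rw [ENNReal.rpow_mul, ← ofReal_two_rpow_rpow]
        exact mul_le_mul_right
          (choquet_ball_le_energy hδ hp _ x (Real.rpow_pos_of_pos two_pos _)) _
    _ = _ := by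
      rw [mul_comm, mul_assoc, ← two_rpow_add, mul_right_comm _ (2 ^ (δ * (1 - p⁻¹))),
        mul_assoc _ (2 ^ (δ * (1 - p⁻¹))), ← two_rpow_add]
      ring_nf

end Hedberg

theorem riesz_hedberg_general (n : ℕ) (δ α κ p : ℝ) (hδ0 : 0 < δ)
    (hα0 : 0 < α) (hαδ : α < δ) (hκα : κ < α) (hp1 : 1 ≤ p)
    (hp2 : p < δ / α) :
    ∃ c : ℝ≥0∞, c ≠ ∞ ∧ ∀ (f : EuclideanSpace ℝ (Fin n) → EReal)
      (x : EuclideanSpace ℝ (Fin n)),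
      riesz n δ α f x ≤
        c * (maxF n δ κ f x) ^ ((δ - p * α) / (δ - κ * p)) *
          (choquet n δ Set.univ (fun y => (f y).abs ^ p)) ^ ((α - κ) / (δ - κ * p)) := by
  have hp0 : 0 < p := one_pos.trans_le hp1
  have hpα : α * p < δ := by rwa [lt_div_iff₀ hα0, mul_comm] at hp2
  have hden : 0 < δ - κ * p := by nlinarith
  have hγ : α - δ * p⁻¹ < 0 := by
    rw [sub_neg, ← div_eq_mul_inv, lt_div_iff₀ hp0]
    exact hpα
  have hθM : -(α - δ * p⁻¹) / (α - κ - (α - δ * p⁻¹)) = (δ - p * α) / (δ - κ * p) := by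
    field_simp
    ring
  have hθI : p⁻¹ * ((α - κ) / (α - κ - (α - δ * p⁻¹))) = (α - κ) / (δ - κ * p) := by
    field_simp
    ring
  obtain ⟨C, hC, hsum⟩ := exists_tsum_le_of_le_two_rpow (sub_pos.2 hκα) hγ
  refine ⟨C * (2 ^ (δ - κ)) ^ ((δ - p * α) / (δ - κ * p)) *
    ((ENNReal.ofReal (p / (p - 1)) + 1) * 2 ^ (δ * (1 - p⁻¹))) ^
      ((α - κ) / (α - κ - (α - δ * p⁻¹))), ?_, fun f x => ?_⟩
  · finiteness
  calc riesz n δ α f x ≤ _ := riesz_le_tsum_dyadic hδ0 hαδ.le f x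
    _ ≤ _ := hsum _ _ _ (dyadic_term_le_maxF hδ0 α κ f x) (dyadic_term_le_energy hδ0 α hp1 f x)
    _ = _ := by
      rw [hθM, ENNReal.mul_rpow_of_nonneg _ _ (div_nonneg (by linarith) hden.le),
        ENNReal.mul_rpow_of_nonneg _ _ (div_nonneg (by linarith) (by linarith)),
        ← ENNReal.rpow_mul (choquet n δ univ _), hθI]
      ring

/-- Hedberg-type pointwise inequality for the Hausdorff content Riesz potential: for
`δ ∈ (0, n]`, `α ∈ (0, δ)`, `κ ∈ [0, α)` and `p ∈ [1, δ/α)` there is a constant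
`c = c(n, α, δ, κ, p)` such that for every function `f : ℝⁿ → [-∞, ∞]` and every `x`,
`R^δ_α f(x) ≤ c (M^δ_κ f(x))^{(δ-pα)/(δ-κp)} (∫ |f|^p dH^δ_∞)^{(α-κ)/(δ-κp)}`. -/
theorem riesz_hedberg (n : ℕ) (hn : 1 ≤ n) (δ α κ p : ℝ) (hδ0 : 0 < δ) (hδn : δ ≤ n)
    (hα0 : 0 < α) (hαδ : α < δ) (hκ0 : 0 ≤ κ) (hκα : κ < α) (hp1 : 1 ≤ p)
    (hp2 : p < δ / α) :
    ∃ c : ℝ≥0∞, c ≠ ∞ ∧ ∀ (f : EuclideanSpace ℝ (Fin n) → EReal)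
      (x : EuclideanSpace ℝ (Fin n)),
      riesz n δ α f x ≤
        c * (maxF n δ κ f x) ^ ((δ - p * α) / (δ - κ * p)) *
          (choquet n δ Set.univ (fun y => (f y).abs ^ p)) ^ ((α - κ) / (δ - κ * p)) :=
  riesz_hedberg_general n δ α κ p hδ0 hα0 hαδ hκα hp1 hp2
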